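/- Let P ∈ R be irreducible and let λ₀, λ₁, λ₂, λ₃ be complex numbers such that D(P) = (λ₀Y₀ + λ₁Y₁ + λ₂Y₂ + λ₃)·P. Then λ₃ is a rational number. -/

import Mathlib

/-!
Grade `ℂ[T, Q, Y₀, Y₁, Y₂]` by giving `T`, `Q`, `Yᵢ` the weights `-1`, `0`, `1`. Modulo terms that
raise this weight, `D` acts as the Euler-type operator `w Q ∂_Q`: `D T = w` and `D Yᵢ = Yᵢ² - L`
raise weight by one, and so does multiplication by `λ₀Y₀ + λ₁Y₁ + λ₂Y₂`. Comparing the coefficients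
of `D P = (λ₀Y₀ + λ₁Y₁ + λ₂Y₂ + λ₃) P` at a monomial `T^i Q^k Y^m` of least weight in `P` therefore
gives `λ₃ = w k = (1 - γ) k`.
-/

open MvPolynomial

/-- In `R = ℂ[T,Q,Y₀,Y₁,Y₂]` (variables `X 0 = T`, `X 1 = Q`, `X 2 = Y₀`, `X 3 = Y₁`,
`X 4 = Y₂`), the polynomial `L = (1/4)(a(Y₀−Y₁)² + b(Y₀−Y₂)² + c(Y₁−Y₂)²)`. -/
noncomputable def Lpoly5 (a b c : ℂ) : MvPolynomial (Fin 5) ℂ :=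
  C (1 / 4 : ℂ) * (C a * (X 2 - X 3) ^ 2 + C b * (X 2 - X 4) ^ 2 + C c * (X 3 - X 4) ^ 2)

namespace MvPolynomial

section WeightFiltration

variable {σ R : Type*} [CommSemiring R] {w : σ → ℤ} {m n : ℤ} {p q : MvPolynomial σ R}

noncomputable def weightFiltration (w : σ → ℤ) (n : ℤ) : Submodule R (MvPolynomial σ R) :=
  restrictSupport R {d | n ≤ Finsupp.weight w d}

theorem mem_weightFiltration_iff :
    p ∈ weightFiltration w n ↔ ∀ d ∈ p.support, n ≤ Finsupp.weight w d :=
  Iff.rfl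

theorem coeff_eq_zero_of_mem_weightFiltration {d : σ →₀ ℕ} (hp : p ∈ weightFiltration w n)
    (hd : Finsupp.weight w d < n) : coeff d p = 0 :=
  notMem_support_iff.mp fun h => (hd.trans_le (hp h)).false

theorem monomial_mem_weightFiltration {d : σ →₀ ℕ} (a : R) (hd : n ≤ Finsupp.weight w d) :
    monomial d a ∈ weightFiltration w n := by
  classical
  refine mem_weightFiltration_iff.2 fun e he => ?_
  rw [mem_support_iff, coeff_monomial] at he
  rwa [← (ite_ne_right_iff.mp he).1]

theorem X_mem_weightFiltration (i : σ) : (X i : MvPolynomial σ R) ∈ weightFiltration w (w i) :=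
  monomial_mem_weightFiltration _ (by rw [Finsupp.weight_single, one_smul])

theorem C_mem_weightFiltration (a : R) : C a ∈ weightFiltration w 0 :=
  monomial_mem_weightFiltration _ (map_zero _).ge

theorem C_mul_mem_weightFiltration (a : R) (hp : p ∈ weightFiltration w n) :
    C a * p ∈ weightFiltration w n :=
  smul_eq_C_mul p a ▸ Submodule.smul_mem _ a hp

theorem mul_mem_weightFiltration (hp : p ∈ weightFiltration w m)
    (hq : q ∈ weightFiltration w n) : p * q ∈ weightFiltration w (m + n) := by
  classical
  refine mem_weightFiltration_iff.2 fun d hd => ?_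
  obtain ⟨e, he, f, hf, rfl⟩ := Finset.mem_add.mp (support_mul p q hd)
  rw [map_add]
  exact add_le_add (mem_weightFiltration_iff.1 hp e he) (mem_weightFiltration_iff.1 hq f hf)

theorem pow_mem_weightFiltration (hp : p ∈ weightFiltration w n) (k : ℕ) :
    p ^ k ∈ weightFiltration w (k * n) := by
  induction k with
  | zero => simpa using C_mem_weightFiltration (w := w) (1 : R)
  | succ k ih =>
    rw [pow_succ, Nat.cast_succ, add_one_mul]
    exact mul_mem_weightFiltration ih hp

theorem pderiv_mem_weightFiltration (i : σ) (hp : p ∈ weightFiltration w n) :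
    pderiv i p ∈ weightFiltration w (n - w i) := by
  refine mem_weightFiltration_iff.2 fun d hd => ?_
  rw [mem_support_iff, coeff_pderiv] at hd
  have := mem_weightFiltration_iff.1 hp _ (mem_support_iff.mpr (left_ne_zero_of_mul hd))
  rw [map_add, Finsupp.weight_single, one_smul] at this
  linarith

end WeightFiltration

variable {σ R : Type*}

theorem coeff_X_mul_pderiv [CommSemiring R] (i : σ) (d : σ →₀ ℕ) (p : MvPolynomial σ R) :
    coeff d (X i * pderiv i p) = d i * coeff d p := by
  classical
  induction p using MvPolynomial.induction_on' with
  | monomial e a =>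
    rw [X_mul_pderiv_monomial, coeff_smul, coeff_monomial]
    split_ifs with h
    · rw [h, nsmul_eq_mul]
    · rw [smul_zero, mul_zero]
  | add p q hp hq => rw [map_add, mul_add, coeff_add, coeff_add, hp, hq, mul_add]

theorem derivation_eq_sum_pderiv [CommSemiring R] [Fintype σ]
    (D : Derivation R (MvPolynomial σ R) (MvPolynomial σ R)) (p : MvPolynomial σ R) :
    D p = ∑ i, D (X i) * pderiv i p := by
  classical
  have sum_apply (f : σ → Derivation R (MvPolynomial σ R) (MvPolynomial σ R)) q :
      (∑ i, f i) q = ∑ i, f i q := by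
    simp only [← Derivation.coeFnAddMonoidHom_apply, map_sum, Finset.sum_apply]
  suffices D = ∑ i, D (X i) • pderiv i by
    conv_lhs => rw [this]
    simp only [sum_apply, Derivation.smul_apply, smul_eq_mul]
  refine derivation_ext fun j => ?_
  simp [sum_apply, Pi.single_apply]

theorem coeff_derivation_of_mem_weightFiltration [CommRing R] [Fintype σ] {w : σ → ℤ}
    (D : Derivation R (MvPolynomial σ R) (MvPolynomial σ R)) (c : σ → R)
    (hD : ∀ i, D (X i) - C (c i) * X i ∈ weightFiltration w (w i + 1))
    {p : MvPolynomial σ R} {d : σ →₀ ℕ}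
    (hp : p ∈ weightFiltration w (Finsupp.weight w d)) :
    coeff d (D p) = (∑ i, c i * d i) * coeff d p := by
  have hterm (i : σ) : coeff d (D (X i) * pderiv i p) = c i * d i * coeff d p := by
    have hrest : coeff d ((D (X i) - C (c i) * X i) * pderiv i p) = 0 :=
      coeff_eq_zero_of_mem_weightFiltration
        (mul_mem_weightFiltration (hD i) (pderiv_mem_weightFiltration i hp)) (by linarith)
    rw [← sub_add_cancel (D (X i)) (C (c i) * X i), add_mul, coeff_add, hrest, zero_add,
      mul_assoc, coeff_C_mul, coeff_X_mul_pderiv, mul_assoc]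
  rw [derivation_eq_sum_pderiv, coeff_sum, Finset.sum_mul]
  exact Finset.sum_congr rfl fun i _ => hterm i

end MvPolynomial

def tqyWeight : Fin 5 → ℤ := ![-1, 0, 1, 1, 1]

theorem X_mem_weightFiltration_tqyWeight {i : Fin 5} (hi : 2 ≤ i) :
    (X i : MvPolynomial (Fin 5) ℂ) ∈ weightFiltration tqyWeight 1 := by
  convert X_mem_weightFiltration i
  fin_cases i <;> simp_all [tqyWeight]

theorem Lpoly5_mem_weightFiltration (a b c : ℂ) :
    Lpoly5 a b c ∈ weightFiltration tqyWeight 2 := by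
  have hsq {i j : Fin 5} (hi : 2 ≤ i) (hj : 2 ≤ j) :
      (X i - X j : MvPolynomial (Fin 5) ℂ) ^ 2 ∈ weightFiltration tqyWeight 2 := by
    simpa using pow_mem_weightFiltration
      (sub_mem (X_mem_weightFiltration_tqyWeight hi) (X_mem_weightFiltration_tqyWeight hj)) 2
  exact C_mul_mem_weightFiltration _ <| add_mem
    (add_mem (C_mul_mem_weightFiltration _ (hsq (by decide) (by decide)))
      (C_mul_mem_weightFiltration _ (hsq (by decide) (by decide))))
    (C_mul_mem_weightFiltration _ (hsq (by decide) (by decide)))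

theorem derivation_X_sub_mem_weightFiltration {a b c w : ℂ}
    {D : Derivation ℂ (MvPolynomial (Fin 5) ℂ) (MvPolynomial (Fin 5) ℂ)}
    (hDT : D (X 0) = C w) (hDQ : D (X 1) = C w * X 1)
    (hDY0 : D (X 2) = (X 2) ^ 2 - Lpoly5 a b c) (hDY1 : D (X 3) = (X 3) ^ 2 - Lpoly5 a b c)
    (hDY2 : D (X 4) = (X 4) ^ 2 - Lpoly5 a b c) (i : Fin 5) :
    D (X i) - C (![0, w, 0, 0, 0] i) * X i ∈ weightFiltration tqyWeight (tqyWeight i + 1) := by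
  have hY (i : Fin 5) (hi : 2 ≤ i) : X i ^ 2 - Lpoly5 a b c ∈ weightFiltration tqyWeight 2 :=
    sub_mem (by simpa using pow_mem_weightFiltration (X_mem_weightFiltration_tqyWeight hi) 2)
      (Lpoly5_mem_weightFiltration a b c)
  fin_cases i
  · simpa [hDT, tqyWeight] using C_mem_weightFiltration w
  · simp [hDQ]
  · simpa [hDY0, tqyWeight] using hY 2 (by decide)
  · simpa [hDY1, tqyWeight] using hY 3 (by decide)
  · simpa [hDY2, tqyWeight] using hY 4 (by decide)

theorem stmt_9_general (γ : ℚ)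
    (a b c w : ℂ)
    (hw : w = 1 - (γ : ℂ))
    (D : Derivation ℂ (MvPolynomial (Fin 5) ℂ) (MvPolynomial (Fin 5) ℂ))
    (hDT : D (X 0) = C w)
    (hDQ : D (X 1) = C w * X 1)
    (hDY0 : D (X 2) = (X 2) ^ 2 - Lpoly5 a b c)
    (hDY1 : D (X 3) = (X 3) ^ 2 - Lpoly5 a b c)
    (hDY2 : D (X 4) = (X 4) ^ 2 - Lpoly5 a b c)
    (P : MvPolynomial (Fin 5) ℂ) (hP : Irreducible P) (l₀ l₁ l₂ l₃ : ℂ)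
    (hDP : D P = (C l₀ * X 2 + C l₁ * X 3 + C l₂ * X 4 + C l₃) * P) :
    ∃ r : ℚ, l₃ = (r : ℂ) := by
  obtain ⟨d, hd, hmin⟩ := P.support.exists_min_image (Finsupp.weight tqyWeight)
    (support_nonempty.mpr hP.ne_zero)
  have hPw : P ∈ weightFiltration tqyWeight (Finsupp.weight tqyWeight d) :=
    mem_weightFiltration_iff.2 hmin
  have hlin : C l₀ * X 2 + C l₁ * X 3 + C l₂ * X 4 ∈ weightFiltration tqyWeight 1 :=
    add_mem (add_mem (C_mul_mem_weightFiltration _ (X_mem_weightFiltration_tqyWeight (by decide)))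
      (C_mul_mem_weightFiltration _ (X_mem_weightFiltration_tqyWeight (by decide))))
      (C_mul_mem_weightFiltration _ (X_mem_weightFiltration_tqyWeight (by decide)))
  have hcoeff := congrArg (coeff d) hDP
  rw [coeff_derivation_of_mem_weightFiltration D _
      (derivation_X_sub_mem_weightFiltration hDT hDQ hDY0 hDY1 hDY2) hPw,
    add_mul, coeff_add, coeff_C_mul, Fin.sum_univ_five,
    coeff_eq_zero_of_mem_weightFiltration (mul_mem_weightFiltration hlin hPw) (by omega),
    zero_add] at hcoeff
  have hl : l₃ = w * d 1 := by
    refine (mul_right_cancel₀ (mem_support_iff.mp hd) hcoeff).symm.trans ?_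
    simp
  exact ⟨(1 - γ) * d 1, by rw [hl, hw]; push_cast; ring⟩

/-- if `P ∈ R` is irreducible and `D P = (λ₀Y₀ + λ₁Y₁ + λ₂Y₂ + λ₃)·P`, then
`λ₃` is a rational number. -/
theorem stmt_9 (α β γ : ℚ)
    (hα : ∃ n : ℕ, 0 < n ∧ α = 1 / n) (hβ : ∃ n : ℕ, 0 < n ∧ β = 1 / n)
    (hγ : ∃ n : ℕ, 0 < n ∧ γ = 1 / n)
    (h0 : 0 < α) (h1 : α < β) (h2 : β < γ) (h3 : γ < 1) (h4 : α + β < γ)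
    (a b c w : ℂ)
    (ha : a = (γ : ℂ) * (1 - (α : ℂ) - (β : ℂ)) + 2 * (α : ℂ) * (β : ℂ))
    (hb : b = ((α : ℂ) + (β : ℂ)) * ((γ : ℂ) - (α : ℂ) - (β : ℂ)) +
        2 * (α : ℂ) * (β : ℂ) - (γ : ℂ) + 1)
    (hc : c = (γ : ℂ) * ((α : ℂ) + (β : ℂ) - (γ : ℂ) + 1) - 2 * (α : ℂ) * (β : ℂ))
    (hw : w = 1 - (γ : ℂ))
    (D : Derivation ℂ (MvPolynomial (Fin 5) ℂ) (MvPolynomial (Fin 5) ℂ))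
    (hDT : D (X 0) = C w)
    (hDQ : D (X 1) = C w * X 1)
    (hDY0 : D (X 2) = (X 2) ^ 2 - Lpoly5 a b c)
    (hDY1 : D (X 3) = (X 3) ^ 2 - Lpoly5 a b c)
    (hDY2 : D (X 4) = (X 4) ^ 2 - Lpoly5 a b c)
    (P : MvPolynomial (Fin 5) ℂ) (hP : Irreducible P) (l₀ l₁ l₂ l₃ : ℂ)
    (hDP : D P = (C l₀ * X 2 + C l₁ * X 3 + C l₂ * X 4 + C l₃) * P) :
    ∃ r : ℚ, l₃ = (r : ℂ) :=
  stmt_9_general γ a b c w hw D hDT hDQ hDY0 hDY1 hDY2 P hP l₀ l₁ l₂ l₃ hDP
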